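/- Let (u_j^n)_{j∈ℤ, n≥0} be generated by the nonlocal scheme u_j^{n+1} = u_j^n − Δt Σ_{k=1}^{r∨1} W_k (g(u_j^n, u_{j+k}^n) − g(u_{j−k}^n, u_j^n)) from bounded initial data (u_j^0), and set B₁ = inf_j u_j^0, B₂ = sup_j u_j^0. Assume g is monotone (nondecreasing in its first argument, nonincreasing in its second), continuously differentiable on [B₁,B₂]², and that the CFL condition (Δt/Δx)(sup_{[B₁,B₂]²}|∂₁g| + sup_{[B₁,B₂]²}|∂₂g|) ≤ 1 holds. Then the discrete maximum principle holds: B₁ ≤ u_j^n ≤ B₂ for all n ≥ 0 and all j ∈ ℤ. -/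

import Mathlib

/-! Monotonicity of `g` bounds each flux difference `g(u_j, u_{j+k}) - g(u_{j-k}, u_j)` above by
`g(u_j, B₁) - g(B₁, u_j) ≤ (L₁ + L₂)(u_j - B₁)` and below by `-(L₁ + L₂)(B₂ - u_j)`, where the
Lipschitz constants `L₁, L₂` of `g` in each variable are the suprema of its partial derivatives.
Since `∑ W_k ≤ 1/Δx`, the CFL condition makes one step move `u_j` by at most its distance to
`B₁` (resp. `B₂`), and induction on `n` gives the bounds. -/

open MeasureTheory Real Set Filter Topology

noncomputable section

/-- The nonlocal entropy flux `q(a,b;c) = g(a ⊔ c, b ⊔ c) - g(a ⊓ c, b ⊓ c)`. -/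
def entFlux (g : ℝ → ℝ → ℝ) (a b c : ℝ) : ℝ :=
  g (max a c) (max b c) - g (min a c) (min b c)

/-- An admissible nonlocal interaction kernel with horizon `δ`. -/
structure AdmissibleKernel (δ : ℝ) (ω : ℝ → ℝ) : Prop where
  nonneg : ∀ h, 0 ≤ ω h
  integrable : Integrable ω
  supp : ∀ h, h ∉ Set.Icc 0 δ → ω h = 0
  normalized : (∫ h in (0:ℝ)..δ, ω h) = 1

/-- `r = ⌊δ / Δx⌋`. -/
def gridR (δ Δx : ℝ) : ℕ := ⌊δ / Δx⌋₊

/-- `r ∨ 1 = max r 1`. -/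
def gridR1 (δ Δx : ℝ) : ℕ := max (gridR δ Δx) 1

/-- The quadrature weights `W_k`. -/
def qWeight (ω : ℝ → ℝ) (δ Δx : ℝ) (k : ℕ) : ℝ :=
  (1 / ((k : ℝ) * Δx)) * (∫ h in (((k : ℝ) - 1) * Δx)..((k : ℝ) * Δx), ω h)
    + (if k = gridR δ Δx then 1 else 0) / ((gridR1 δ Δx : ℝ) * Δx)
        * (∫ h in ((gridR δ Δx : ℝ) * Δx)..δ, ω h)

/-- One step of the nonlocal scheme `H`. -/
def schemeStep (g : ℝ → ℝ → ℝ) (Δt : ℝ) (W : ℕ → ℝ) (R : ℕ) (v : ℤ → ℝ) (j : ℤ) : ℝ :=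
  v j - Δt * ∑ k ∈ Finset.Icc 1 R,
    W k * (g (v j) (v (j + (k : ℤ))) - g (v (j - (k : ℤ))) (v j))

/-- Iterates of the nonlocal scheme. -/
def schemeSol (g : ℝ → ℝ → ℝ) (Δt : ℝ) (W : ℕ → ℝ) (R : ℕ) (v0 : ℤ → ℝ) : ℕ → ℤ → ℝ
  | 0 => v0
  | n + 1 => schemeStep g Δt W R (schemeSol g Δt W R v0 n)

/-- Cell averages of the initial data. -/
def cellAvg (u₀ : ℝ → ℝ) (Δx : ℝ) (j : ℤ) : ℝ :=
  (1 / Δx) * ∫ x in (((j : ℝ) - 1/2) * Δx)..(((j : ℝ) + 1/2) * Δx), u₀ x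

/-- The numerical solution of the nonlocal scheme with initial data `u₀`. -/
def numSol (g : ℝ → ℝ → ℝ) (ω : ℝ → ℝ) (δ Δx Δt : ℝ) (u₀ : ℝ → ℝ) : ℕ → ℤ → ℝ :=
  schemeSol g Δt (qWeight ω δ Δx) (gridR1 δ Δx) (cellAvg u₀ Δx)

/-- Piecewise constant interpolant of a grid function. -/
def pcInterp (Δx Δt : ℝ) (v : ℕ → ℤ → ℝ) (x t : ℝ) : ℝ :=
  v ⌊t / Δt⌋₊ ⌊x / Δx + 1/2⌋

/-- The piecewise-constant numerical solution `u^{Δ,δ}`. -/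
def numInterp (g : ℝ → ℝ → ℝ) (ω : ℝ → ℝ) (δ Δx Δt : ℝ) (u₀ : ℝ → ℝ) (x t : ℝ) : ℝ :=
  pcInterp Δx Δt (numSol g ω δ Δx Δt u₀) x t

/-- `h^Δ(h) = kΔx` for `h ∈ [(k-1)Δx, kΔx)`. -/
def hDelta (Δx h : ℝ) : ℝ := ((⌊h / Δx⌋ : ℝ) + 1) * Δx

/-- Interpolant of the test function: affine in `x` on each grid cell, piecewise
constant in `t`. -/
def phiDelta (φ : ℝ → ℝ → ℝ) (Δx Δt : ℝ) (x t : ℝ) : ℝ :=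
  φ (((⌊x / Δx + 1/2⌋ : ℝ) - 1/2) * Δx) ((⌊t / Δt⌋₊ : ℝ) * Δt)
    + ((x - ((⌊x / Δx + 1/2⌋ : ℝ) - 1/2) * Δx) / Δx)
      * (φ (((⌊x / Δx + 1/2⌋ : ℝ) + 1/2) * Δx) ((⌊t / Δt⌋₊ : ℝ) * Δt)
          - φ (((⌊x / Δx + 1/2⌋ : ℝ) - 1/2) * Δx) ((⌊t / Δt⌋₊ : ℝ) * Δt))

/-- The `2r`-point numerical flux `𝕘`. -/
def bigFlux (g : ℝ → ℝ → ℝ) (W : ℕ → ℝ) (Δx : ℝ) (R : ℕ) (v : ℤ → ℝ) (j : ℤ) : ℝ :=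
  ∑ k ∈ Finset.Icc 1 R, ∑ l ∈ Finset.Icc 1 k,
    g (v (j - (l : ℤ))) (v (j - (l : ℤ) + (k : ℤ))) * W k * Δx

/-- Supremum of `|∂₁ g|` over `[B₁,B₂] × [B₁,B₂]`. -/
def supAbsDeriv1 (g : ℝ → ℝ → ℝ) (B₁ B₂ : ℝ) : ℝ :=
  sSup ((fun p : ℝ × ℝ => |derivWithin (fun a => g a p.2) (Set.Icc B₁ B₂) p.1|) ''
    (Set.Icc B₁ B₂ ×ˢ Set.Icc B₁ B₂))

/-- Supremum of `|∂₂ g|` over `[B₁,B₂] × [B₁,B₂]`. -/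
def supAbsDeriv2 (g : ℝ → ℝ → ℝ) (B₁ B₂ : ℝ) : ℝ :=
  sSup ((fun p : ℝ × ℝ => |derivWithin (fun b => g p.1 b) (Set.Icc B₁ B₂) p.2|) ''
    (Set.Icc B₁ B₂ ×ˢ Set.Icc B₁ B₂))

/-- Entropy solution of the nonlocal conservation law on `ℝ × [0,T]`. -/
structure IsEntropySolNonlocal (T δ : ℝ) (ω : ℝ → ℝ) (g : ℝ → ℝ → ℝ)
    (u₀ : ℝ → ℝ) (u : ℝ → ℝ → ℝ) : Prop where
  bounded : ∃ M, ∀ x t, |u x t| ≤ M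
  integrable : ∀ t ∈ Set.Icc (0:ℝ) T, Integrable (fun x => u x t)
  contL1 : ∀ t₀ ∈ Set.Icc (0:ℝ) T,
    Tendsto (fun t => ∫ x : ℝ, |u x t - u x t₀|) (nhdsWithin t₀ (Set.Icc 0 T)) (nhds 0)
  init : ∀ x, u x 0 = u₀ x
  entropy : ∀ φ : ℝ → ℝ → ℝ, ContDiff ℝ 1 (fun p : ℝ × ℝ => φ p.1 p.2) →
    HasCompactSupport (fun p : ℝ × ℝ => φ p.1 p.2) → (∀ x t, 0 ≤ φ x t) → ∀ c : ℝ,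
    0 ≤ (∫ t in (0:ℝ)..T, ∫ x : ℝ, |u x t - c| * deriv (fun s => φ x s) t)
      + ∫ t in (0:ℝ)..T, ∫ x : ℝ, ∫ h in (0:ℝ)..δ,
          ((φ (x + h) t - φ x t) / h) * entFlux g (u x t) (u (x + h) t) c * ω h

/-- Kruzhkov entropy solution of the local conservation law `u_t + f(u)_x = 0`. -/
structure IsEntropySolLocal (T : ℝ) (f : ℝ → ℝ) (u₀ : ℝ → ℝ) (u : ℝ → ℝ → ℝ) : Prop where
  bounded : ∃ M, ∀ x t, |u x t| ≤ M
  integrable : ∀ t ∈ Set.Icc (0:ℝ) T, Integrable (fun x => u x t)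
  contL1 : ∀ t₀ ∈ Set.Icc (0:ℝ) T,
    Tendsto (fun t => ∫ x : ℝ, |u x t - u x t₀|) (nhdsWithin t₀ (Set.Icc 0 T)) (nhds 0)
  init : ∀ x, u x 0 = u₀ x
  entropy : ∀ φ : ℝ → ℝ → ℝ, ContDiff ℝ 1 (fun p : ℝ × ℝ => φ p.1 p.2) →
    HasCompactSupport (fun p : ℝ × ℝ => φ p.1 p.2) → (∀ x t, 0 ≤ φ x t) → ∀ c : ℝ,
    0 ≤ ∫ t in (0:ℝ)..T, ∫ x : ℝ,
        (|u x t - c| * deriv (fun s => φ x s) t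
          + Real.sign (u x t - c) * (f (u x t) - f c) * deriv (fun y => φ y t) x)


lemma gridR_mul_le {δ Δx : ℝ} (hδ : 0 ≤ δ) (hΔx : 0 < Δx) : (gridR δ Δx : ℝ) * Δx ≤ δ :=
  (le_div_iff₀ hΔx).1 (Nat.floor_le (div_nonneg hδ hΔx.le))

lemma AdmissibleKernel.intervalIntegral_le_one {δ : ℝ} {ω : ℝ → ℝ} (hω : AdmissibleKernel δ ω)
    (hδ : 0 ≤ δ) {a : ℝ} (ha : 0 ≤ a) : ∫ h in (0:ℝ)..a, ω h ≤ 1 := by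
  have htotal : ∫ h, ω h = 1 := by
    rw [← hω.normalized, intervalIntegral.integral_of_le hδ, ← integral_Icc_eq_integral_Ioc,
      setIntegral_eq_integral_of_forall_compl_eq_zero hω.supp]
  rw [intervalIntegral.integral_of_le ha, ← htotal]
  exact setIntegral_le_integral hω.integrable (Eventually.of_forall hω.nonneg)

lemma sum_integral_adjacent_intervals_Icc (f : ℝ → ℝ)
    (hf : ∀ a b, IntervalIntegrable f volume a b) (Δx : ℝ) (R : ℕ) :
    ∑ k ∈ Finset.Icc 1 R, ∫ h in ((k : ℝ) - 1) * Δx..(k : ℝ) * Δx, f h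
      = ∫ h in (0:ℝ)..(R : ℝ) * Δx, f h := by
  induction R with
  | zero => simp
  | succ R ih =>
    rw [Finset.sum_Icc_succ_top (by omega), ih,
      ← intervalIntegral.integral_add_adjacent_intervals (hf 0 (R * Δx)) (hf _ ((R + 1 : ℕ) * Δx))]
    push_cast
    ring_nf

lemma qWeight_nonneg {δ Δx : ℝ} {ω : ℝ → ℝ} (hδ : 0 ≤ δ) (hΔx : 0 < Δx)
    (hω : AdmissibleKernel δ ω) (k : ℕ) : 0 ≤ qWeight ω δ Δx k := by
  have hint : ∀ a b, a ≤ b → 0 ≤ ∫ h in a..b, ω h :=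
    fun a b hab => intervalIntegral.integral_nonneg hab fun h _ => hω.nonneg h
  have := hint ((k - 1) * Δx) (k * Δx) (by nlinarith)
  have := hint _ _ (gridR_mul_le hδ hΔx)
  unfold qWeight
  split_ifs <;> positivity

-- the factors `1/k` and `1/(r ∨ 1)` in `W_k` are at most `1`
lemma qWeight_le {δ Δx : ℝ} {ω : ℝ → ℝ} (hδ : 0 ≤ δ) (hΔx : 0 < Δx)
    (hω : AdmissibleKernel δ ω) {k : ℕ} (hk : 1 ≤ k) :
    qWeight ω δ Δx k ≤ 1 / Δx * ((∫ h in ((k : ℝ) - 1) * Δx..k * Δx, ω h) +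
      if k = gridR δ Δx then ∫ h in (gridR δ Δx : ℝ) * Δx..δ, ω h else 0) := by
  have hk : (1 : ℝ) ≤ k := by exact_mod_cast hk
  have hR : (1 : ℝ) ≤ gridR1 δ Δx := by exact_mod_cast le_max_right _ 1
  have hI : 0 ≤ ∫ h in ((k : ℝ) - 1) * Δx..k * Δx, ω h :=
    intervalIntegral.integral_nonneg (by nlinarith) fun h _ => hω.nonneg h
  have hT : 0 ≤ ∫ h in (gridR δ Δx : ℝ) * Δx..δ, ω h :=
    intervalIntegral.integral_nonneg (gridR_mul_le hδ hΔx) fun h _ => hω.nonneg h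
  rw [qWeight, mul_add]
  refine add_le_add (mul_le_mul_of_nonneg_right ?_ hI) ?_
  · exact one_div_le_one_div_of_le hΔx (by nlinarith)
  · split_ifs
    · rw [div_mul_eq_mul_div, one_mul, one_div_mul_eq_div]
      exact div_le_div_of_nonneg_left hT hΔx (by nlinarith)
    · simp

lemma sum_qWeight_le {δ Δx : ℝ} {ω : ℝ → ℝ} (hδ : 0 ≤ δ) (hΔx : 0 < Δx)
    (hω : AdmissibleKernel δ ω) :
    ∑ k ∈ Finset.Icc 1 (gridR1 δ Δx), qWeight ω δ Δx k ≤ 1 / Δx := by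
  set r := gridR δ Δx
  set R := gridR1 δ Δx
  set T := ∫ h in (r : ℝ) * Δx..δ, ω h
  have hint : ∀ a b, IntervalIntegrable ω volume a b :=
    fun _ _ => hω.integrable.intervalIntegrable
  have hsum : (∫ h in (0:ℝ)..R * Δx, ω h) + (if r ∈ Finset.Icc 1 R then T else 0) ≤ 1 := by
    rcases r.eq_zero_or_pos with hr | hr
    · have hR : R = 1 := by rw [show R = max r 1 from rfl, hr]; rfl
      simpa [hr, hR] using hω.intervalIntegral_le_one hδ hΔx.le
    · have hR : R = r := max_eq_left hr
      rw [if_pos (Finset.mem_Icc.2 ⟨hr, hR.ge⟩), hR,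
        intervalIntegral.integral_add_adjacent_intervals (hint _ _) (hint _ _), hω.normalized]
  calc ∑ k ∈ Finset.Icc 1 R, qWeight ω δ Δx k
      ≤ ∑ k ∈ Finset.Icc 1 R,
          1 / Δx * ((∫ h in ((k : ℝ) - 1) * Δx..k * Δx, ω h) + if k = r then T else 0) :=
        Finset.sum_le_sum fun k hk => qWeight_le hδ hΔx hω (Finset.mem_Icc.1 hk).1
    _ = 1 / Δx * ((∫ h in (0:ℝ)..R * Δx, ω h) + if r ∈ Finset.Icc 1 R then T else 0) := by
        rw [← Finset.mul_sum, Finset.sum_add_distrib,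
          sum_integral_adjacent_intervals_Icc ω hint, Finset.sum_ite_eq']
    _ ≤ 1 / Δx := mul_le_of_le_one_right (by positivity) hsum

lemma hasDerivWithinAt_fderivWithin_apply_left {f : ℝ × ℝ → ℝ} {s t : Set ℝ} {x y : ℝ}
    (hf : DifferentiableWithinAt ℝ f (s ×ˢ t) (x, y)) (hy : y ∈ t) :
    HasDerivWithinAt (fun z => f (z, y)) (fderivWithin ℝ f (s ×ˢ t) (x, y) (1, 0)) s x := by
  have hmaps : MapsTo (fun z => (z, y)) s (s ×ˢ t) := fun _ hz => ⟨hz, hy⟩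
  exact (hf.hasFDerivWithinAt.comp x
    (hasFDerivAt_prodMk_left (𝕜 := ℝ) x y).hasFDerivWithinAt hmaps).hasDerivWithinAt

lemma bddAbove_abs_derivWithin_left {g : ℝ → ℝ → ℝ} {B₁ B₂ : ℝ} (hlt : B₁ < B₂)
    (hg : ContDiffOn ℝ 1 (fun p : ℝ × ℝ => g p.1 p.2) (Icc B₁ B₂ ×ˢ Icc B₁ B₂)) :
    BddAbove ((fun p : ℝ × ℝ => |derivWithin (fun a => g a p.2) (Icc B₁ B₂) p.1|) ''
      (Icc B₁ B₂ ×ˢ Icc B₁ B₂)) := by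
  have hU : UniqueDiffOn ℝ (Icc B₁ B₂) := uniqueDiffOn_Icc hlt
  have hcont : ContinuousOn (fun p => |fderivWithin ℝ (fun p : ℝ × ℝ => g p.1 p.2)
      (Icc B₁ B₂ ×ˢ Icc B₁ B₂) p (1, 0)|) (Icc B₁ B₂ ×ˢ Icc B₁ B₂) :=
    ((hg.continuousOn_fderivWithin (hU.prod hU) le_rfl).clm_apply continuousOn_const).abs
  refine (isCompact_Icc.prod isCompact_Icc).bddAbove_image (hcont.congr fun p hp => ?_)
  rw [(hasDerivWithinAt_fderivWithin_apply_left (hg.differentiableOn one_ne_zero p hp)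
    hp.2).derivWithin (hU _ hp.1)]

lemma abs_sub_le_supAbsDeriv1 {g : ℝ → ℝ → ℝ} {B₁ B₂ a a' b : ℝ}
    (hg : ContDiffOn ℝ 1 (fun p : ℝ × ℝ => g p.1 p.2) (Icc B₁ B₂ ×ˢ Icc B₁ B₂))
    (ha : a ∈ Icc B₁ B₂) (ha' : a' ∈ Icc B₁ B₂) (hb : b ∈ Icc B₁ B₂) :
    |g a b - g a' b| ≤ supAbsDeriv1 g B₁ B₂ * |a - a'| := by
  rcases (ha.1.trans ha.2).eq_or_lt with heq | hlt
  · obtain rfl : a = a' := by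
      subst heq; exact (Icc_self B₁ ▸ ha).trans (Icc_self B₁ ▸ ha').symm
    simp
  have hderiv : ∀ x ∈ Icc B₁ B₂, HasDerivWithinAt (fun z => g z b) _ (Icc B₁ B₂) x :=
    fun x hx => hasDerivWithinAt_fderivWithin_apply_left
      (hg.differentiableOn one_ne_zero (x, b) ⟨hx, hb⟩) hb
  have := (convex_Icc B₁ B₂).norm_image_sub_le_of_norm_derivWithin_le
    (fun x hx => (hderiv x hx).differentiableWithinAt)
    (fun x hx => le_csSup (bddAbove_abs_derivWithin_left hlt hg) ⟨(x, b), ⟨hx, hb⟩, rfl⟩)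
    ha' ha
  simpa only [supAbsDeriv1, Real.norm_eq_abs] using this

lemma supAbsDeriv2_eq_supAbsDeriv1_flip (g : ℝ → ℝ → ℝ) (B₁ B₂ : ℝ) :
    supAbsDeriv2 g B₁ B₂ = supAbsDeriv1 (flip g) B₁ B₂ := by
  rw [supAbsDeriv1, supAbsDeriv2]
  conv_rhs => rw [← image_swap_prod, ← image_comp]
  rfl

lemma abs_sub_le_supAbsDeriv2 {g : ℝ → ℝ → ℝ} {B₁ B₂ a b b' : ℝ}
    (hg : ContDiffOn ℝ 1 (fun p : ℝ × ℝ => g p.1 p.2) (Icc B₁ B₂ ×ˢ Icc B₁ B₂))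
    (ha : a ∈ Icc B₁ B₂) (hb : b ∈ Icc B₁ B₂) (hb' : b' ∈ Icc B₁ B₂) :
    |g a b - g a b'| ≤ supAbsDeriv2 g B₁ B₂ * |b - b'| := by
  rw [supAbsDeriv2_eq_supAbsDeriv1_flip]
  exact abs_sub_le_supAbsDeriv1 (g := flip g)
    (hg.comp (contDiff_snd.prodMk contDiff_fst).contDiffOn fun p hp => ⟨hp.2, hp.1⟩) hb hb' ha

lemma supAbsDeriv1_nonneg (g : ℝ → ℝ → ℝ) (B₁ B₂ : ℝ) : 0 ≤ supAbsDeriv1 g B₁ B₂ :=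
  Real.sSup_nonneg (by rintro _ ⟨p, _, rfl⟩; exact abs_nonneg _)

lemma flux_sub_le {g : ℝ → ℝ → ℝ} {B₁ B₂ L₁ L₂ a b c : ℝ}
    (hg₁ : ∀ b ∈ Icc B₁ B₂, MonotoneOn (g · b) (Icc B₁ B₂))
    (hg₂ : ∀ a ∈ Icc B₁ B₂, AntitoneOn (g a) (Icc B₁ B₂))
    (hL₁ : ∀ a ∈ Icc B₁ B₂, ∀ a' ∈ Icc B₁ B₂, ∀ b ∈ Icc B₁ B₂,
      |g a b - g a' b| ≤ L₁ * |a - a'|)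
    (hL₂ : ∀ a ∈ Icc B₁ B₂, ∀ b ∈ Icc B₁ B₂, ∀ b' ∈ Icc B₁ B₂,
      |g a b - g a b'| ≤ L₂ * |b - b'|)
    (ha : a ∈ Icc B₁ B₂) (hb : b ∈ Icc B₁ B₂) (hc : c ∈ Icc B₁ B₂) :
    g b c - g a b ≤ (L₁ + L₂) * (b - B₁) := by
  have hB₁ : B₁ ∈ Icc B₁ B₂ := ⟨le_rfl, hb.1.trans hb.2⟩
  have hc' := hg₂ b hb hB₁ hc hc.1
  have ha' := hg₁ b hb hB₁ ha ha.1
  have h₁ := (le_abs_self _).trans (hL₁ b hb B₁ hB₁ B₁ hB₁)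
  have h₂ := (le_abs_self _).trans (hL₂ B₁ hB₁ B₁ hB₁ b hb)
  rw [abs_of_nonneg (sub_nonneg.2 hb.1)] at h₁
  rw [abs_sub_comm, abs_of_nonneg (sub_nonneg.2 hb.1)] at h₂
  linarith

lemma neg_le_flux_sub {g : ℝ → ℝ → ℝ} {B₁ B₂ L₁ L₂ a b c : ℝ}
    (hg₁ : ∀ b ∈ Icc B₁ B₂, MonotoneOn (g · b) (Icc B₁ B₂))
    (hg₂ : ∀ a ∈ Icc B₁ B₂, AntitoneOn (g a) (Icc B₁ B₂))
    (hL₁ : ∀ a ∈ Icc B₁ B₂, ∀ a' ∈ Icc B₁ B₂, ∀ b ∈ Icc B₁ B₂,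
      |g a b - g a' b| ≤ L₁ * |a - a'|)
    (hL₂ : ∀ a ∈ Icc B₁ B₂, ∀ b ∈ Icc B₁ B₂, ∀ b' ∈ Icc B₁ B₂,
      |g a b - g a b'| ≤ L₂ * |b - b'|)
    (ha : a ∈ Icc B₁ B₂) (hb : b ∈ Icc B₁ B₂) (hc : c ∈ Icc B₁ B₂) :
    -((L₁ + L₂) * (B₂ - b)) ≤ g b c - g a b := by
  have hB₂ : B₂ ∈ Icc B₁ B₂ := ⟨hb.1.trans hb.2, le_rfl⟩
  have hc' := hg₂ b hb hc hB₂ hc.2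
  have ha' := hg₁ b hb ha hB₂ ha.2
  have h₁ := (le_abs_self _).trans (hL₁ B₂ hB₂ b hb B₂ hB₂)
  have h₂ := (le_abs_self _).trans (hL₂ B₂ hB₂ b hb B₂ hB₂)
  rw [abs_of_nonneg (sub_nonneg.2 hb.2)] at h₁
  rw [abs_sub_comm, abs_of_nonneg (sub_nonneg.2 hb.2)] at h₂
  linarith

lemma schemeStep_mem_Icc {g : ℝ → ℝ → ℝ} {Δt B₁ B₂ L₁ L₂ : ℝ} {W : ℕ → ℝ} {R : ℕ}
    {v : ℤ → ℝ} (hg₁ : ∀ b ∈ Icc B₁ B₂, MonotoneOn (g · b) (Icc B₁ B₂))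
    (hg₂ : ∀ a ∈ Icc B₁ B₂, AntitoneOn (g a) (Icc B₁ B₂))
    (hL₁ : ∀ a ∈ Icc B₁ B₂, ∀ a' ∈ Icc B₁ B₂, ∀ b ∈ Icc B₁ B₂,
      |g a b - g a' b| ≤ L₁ * |a - a'|)
    (hL₂ : ∀ a ∈ Icc B₁ B₂, ∀ b ∈ Icc B₁ B₂, ∀ b' ∈ Icc B₁ B₂,
      |g a b - g a b'| ≤ L₂ * |b - b'|)
    (hΔt : 0 ≤ Δt) (hW : ∀ k, 0 ≤ W k)
    (hCFL : Δt * (∑ k ∈ Finset.Icc 1 R, W k) * (L₁ + L₂) ≤ 1)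
    (hv : ∀ j, v j ∈ Icc B₁ B₂) (j : ℤ) :
    schemeStep g Δt W R v j ∈ Icc B₁ B₂ := by
  set S := ∑ k ∈ Finset.Icc 1 R, W k
  set D := ∑ k ∈ Finset.Icc 1 R, W k * (g (v j) (v (j + k)) - g (v (j - k)) (v j))
  have hlow : D ≤ S * ((L₁ + L₂) * (v j - B₁)) := by
    rw [Finset.sum_mul]
    exact Finset.sum_le_sum fun k _ => mul_le_mul_of_nonneg_left
      (flux_sub_le hg₁ hg₂ hL₁ hL₂ (hv _) (hv j) (hv _)) (hW k)
  have hup : S * -((L₁ + L₂) * (B₂ - v j)) ≤ D := by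
    rw [Finset.sum_mul]
    exact Finset.sum_le_sum fun k _ => mul_le_mul_of_nonneg_left
      (neg_le_flux_sub hg₁ hg₂ hL₁ hL₂ (hv _) (hv j) (hv _)) (hW k)
  have h₁ := mul_le_mul_of_nonneg_right hCFL (sub_nonneg.2 (hv j).1)
  have h₂ := mul_le_mul_of_nonneg_right hCFL (sub_nonneg.2 (hv j).2)
  have h₃ := mul_le_mul_of_nonneg_left hlow hΔt
  have h₄ := mul_le_mul_of_nonneg_left hup hΔt
  constructor <;> (simp only [schemeStep]; linarith)

/-- discrete maximum principle for the nonlocal scheme. -/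
theorem discrete_maximum_principle
    (δ Δx Δt B₁ B₂ : ℝ) (hδ : 0 < δ) (hΔx : 0 < Δx) (hΔt : 0 < Δt)
    (ω : ℝ → ℝ) (hω : AdmissibleKernel δ ω)
    (g : ℝ → ℝ → ℝ)
    (u : ℕ → ℤ → ℝ)
    (hrec : ∀ n, u (n + 1) = schemeStep g Δt (qWeight ω δ Δx) (gridR1 δ Δx) (u n))
    (hB₁ : IsGLB (Set.range (u 0)) B₁) (hB₂ : IsLUB (Set.range (u 0)) B₂)
    (hg1 : ∀ a a' b, a ∈ Set.Icc B₁ B₂ → a' ∈ Set.Icc B₁ B₂ → b ∈ Set.Icc B₁ B₂ →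
      a ≤ a' → g a b ≤ g a' b)
    (hg2 : ∀ a b b', a ∈ Set.Icc B₁ B₂ → b ∈ Set.Icc B₁ B₂ → b' ∈ Set.Icc B₁ B₂ →
      b ≤ b' → g a b' ≤ g a b)
    (hgC1 : ContDiffOn ℝ 1 (fun p : ℝ × ℝ => g p.1 p.2) (Set.Icc B₁ B₂ ×ˢ Set.Icc B₁ B₂))
    (hCFL : Δt / Δx * (supAbsDeriv1 g B₁ B₂ + supAbsDeriv2 g B₁ B₂) ≤ 1)
    :
    ∀ n j, u n j ∈ Set.Icc B₁ B₂ := by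
  have hL : 0 ≤ supAbsDeriv1 g B₁ B₂ + supAbsDeriv2 g B₁ B₂ := by
    rw [supAbsDeriv2_eq_supAbsDeriv1_flip]
    exact add_nonneg (supAbsDeriv1_nonneg _ _ _) (supAbsDeriv1_nonneg _ _ _)
  have hCFL' : Δt * (∑ k ∈ Finset.Icc 1 (gridR1 δ Δx), qWeight ω δ Δx k) *
      (supAbsDeriv1 g B₁ B₂ + supAbsDeriv2 g B₁ B₂) ≤ 1 := by
    refine le_trans ?_ hCFL
    rw [div_eq_mul_one_div]
    gcongr
    exact sum_qWeight_le hδ.le hΔx hω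
  intro n
  induction n with
  | zero => exact fun j => ⟨hB₁.1 ⟨j, rfl⟩, hB₂.1 ⟨j, rfl⟩⟩
  | succ n ih =>
    rw [hrec n]
    exact schemeStep_mem_Icc (fun b hb a ha a' ha' h => hg1 a a' b ha ha' hb h)
      (fun a ha b hb b' hb' h => hg2 a b b' ha hb hb' h)
      (fun _ ha _ ha' _ hb => abs_sub_le_supAbsDeriv1 hgC1 ha ha' hb)
      (fun _ ha _ hb _ hb' => abs_sub_le_supAbsDeriv2 hgC1 ha hb hb')
      hΔt.le (qWeight_nonneg hδ.le hΔx hω) hCFL' ih
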